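/- With the setup of the previous statement and additionally Hermitian operators $X_K, X_R, X_{K'}, X_{R'}$ with $Z = V^\dagger(X_{K'}+X_{R'})V - (X_K + X_R)$ and $W_K = \mathrm{tr}_R[(1\otimes\rho_R)Z]$, the commutator expectation identity holds: $\mathrm{tr}[(\rho\otimes\rho_R)[V^\dagger(1\otimes X_{R'})V,\, N]] = \mathrm{tr}[\rho\,[Q, Y_K + W_K]]$ where $Y_K = X_K - \mathcal{L}^\dagger(X_{K'})$ and $N = V^\dagger(P\otimes 1)V - Q\otimes 1$. -/

import Mathlib

/-!
Conjugation by `V` is multiplicative because `V Vᴴ = 1`, so `Vᴴ (1 ⊗ X_{R'}) V` commutes with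
`Vᴴ (P ⊗ 1) V` and its commutator with `N` is `[Q ⊗ 1, Vᴴ (1 ⊗ X_{R'}) V]`. The expectation of
such a commutator in `ρ ⊗ ρ_R` is the expectation in `ρ` of `[Q, B]`, where
`B = tr_R[(1 ⊗ ρ_R) Vᴴ (1 ⊗ X_{R'}) V]`. On the other side, expanding `Z` and using `tr ρ_R = 1`
gives `Y_K + W_K = B - tr(ρ_R X_R) • 1`, and the scalar drops out of the commutator with `Q`.
-/

open Matrix
open scoped Kronecker ComplexOrder

variable {n m : Type*} [Fintype n] [DecidableEq n] [Fintype m] [DecidableEq m]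

open Classical in
/-- square root of a matrix (zero if not PSD) -/
noncomputable def msqrt (A : Matrix n n ℂ) : Matrix n n ℂ :=
  if h : A.PosSemidef then
    (h.1.eigenvectorUnitary : Matrix n n ℂ) * diagonal (((↑) : ℝ → ℂ) ∘ Real.sqrt ∘ h.1.eigenvalues) *
      (star h.1.eigenvectorUnitary : Matrix n n ℂ)
  else 0

/-- trace norm -/
noncomputable def traceNorm (X : Matrix n m ℂ) : ℝ :=
  ((msqrt (Xᴴ * X)).trace).re

def IsDensity (ρ : Matrix n n ℂ) : Prop := ρ.PosSemidef ∧ ρ.trace = 1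

noncomputable def variance (σ A : Matrix n n ℂ) : ℝ :=
  (Matrix.trace (σ * (A * A))).re - ((Matrix.trace (σ * A)).re) ^ 2

/-- `L` is a symmetric logarithmic derivative for `(σ, W)`. -/
def IsSLD (σ W L : Matrix n n ℂ) : Prop :=
  L.IsHermitian ∧ L * σ + σ * L = ((-2 : ℂ) * Complex.I) • (W * σ - σ * W)

/-- SLD Fisher information value associated with a given SLD `L`. -/
noncomputable def fisherVal (σ L : Matrix n n ℂ) : ℝ :=
  (Matrix.trace (σ * (L * L))).re

noncomputable def fidelity (ρ σ : Matrix n n ℂ) : ℝ :=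
  ((msqrt (msqrt ρ * σ * msqrt ρ)).trace).re

noncomputable def purifiedDist (ρ σ : Matrix n n ℂ) : ℝ :=
  Real.sqrt (1 - fidelity ρ σ ^ 2)

/-- completely positive -/
def IsCompletelyPositive (Φ : Matrix n n ℂ →ₗ[ℂ] Matrix m m ℂ) : Prop :=
  ∀ (k : ℕ) (M : Matrix (Fin k × n) (Fin k × n) ℂ), M.PosSemidef →
    (Matrix.of fun (p q : Fin k × m) => (Φ (Matrix.of fun i j => M (p.1, i) (q.1, j))) p.2 q.2).PosSemidef

def IsCPTP (Φ : Matrix n n ℂ →ₗ[ℂ] Matrix m m ℂ) : Prop :=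
  IsCompletelyPositive Φ ∧ ∀ X, (Φ X).trace = X.trace

/-- partial trace over the second factor -/
noncomputable def ptraceR {k r : Type*} [Fintype k] [Fintype r]
    (M : Matrix (k × r) (k × r) ℂ) : Matrix k k ℂ :=
  Matrix.of fun i j => ∑ a : r, M (i, a) (j, a)

lemma ptraceR_add {k r : Type*} [Fintype k] [Fintype r] (M N : Matrix (k × r) (k × r) ℂ) :
    ptraceR (M + N) = ptraceR M + ptraceR N := by
  ext i j; simp [ptraceR, Finset.sum_add_distrib]

lemma ptraceR_sub {k r : Type*} [Fintype k] [Fintype r] (M N : Matrix (k × r) (k × r) ℂ) :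
    ptraceR (M - N) = ptraceR M - ptraceR N := by
  ext i j; simp [ptraceR, Finset.sum_sub_distrib]

lemma ptraceR_kronecker {k r : Type*} [Fintype k] [Fintype r] (C : Matrix k k ℂ)
    (D : Matrix r r ℂ) : ptraceR (C ⊗ₖ D) = D.trace • C := by
  ext i j
  simp [ptraceR, Matrix.trace, ← Finset.mul_sum, mul_comm]

lemma ptraceR_one_kronecker_mul_kronecker {k r : Type*} [Fintype k] [DecidableEq k]
    [Fintype r] (σ : Matrix r r ℂ) (X : Matrix k k ℂ) (Y : Matrix r r ℂ) :
    ptraceR ((1 ⊗ₖ σ) * (X ⊗ₖ Y)) = (σ * Y).trace • X := by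
  rw [← mul_kronecker_mul, one_mul, ptraceR_kronecker]

lemma trace_kronecker_mul {k r : Type*} [Fintype k] [DecidableEq k] [Fintype r]
    (C : Matrix k k ℂ) (σ : Matrix r r ℂ) (A : Matrix (k × r) (k × r) ℂ) :
    ((C ⊗ₖ σ) * A).trace = (C * ptraceR ((1 ⊗ₖ σ) * A)).trace := by
  simp only [Matrix.trace, diag_apply, mul_apply, ptraceR, of_apply, kroneckerMap_apply,
    Fintype.sum_prod_type, one_apply, ite_mul, one_mul, zero_mul, Finset.mul_sum,
    Finset.sum_ite_irrel, Finset.sum_const_zero, Finset.sum_ite_eq, Finset.mem_univ, if_true]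
  refine Finset.sum_congr rfl fun i _ => ?_
  rw [Finset.sum_comm]
  refine Finset.sum_congr rfl fun j _ => Finset.sum_congr rfl fun a _ =>
    Finset.sum_congr rfl fun b _ => ?_
  ring

lemma trace_kronecker_mul_commutator_kronecker_one {k r : Type*} [Fintype k] [DecidableEq k]
    [Fintype r] [DecidableEq r] (ρ C : Matrix k k ℂ) (σ : Matrix r r ℂ)
    (A : Matrix (k × r) (k × r) ℂ) :
    ((ρ ⊗ₖ σ) * ((C ⊗ₖ (1 : Matrix r r ℂ)) * A - A * (C ⊗ₖ (1 : Matrix r r ℂ)))).trace =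
      (ρ * (C * ptraceR ((1 ⊗ₖ σ) * A) - ptraceR ((1 ⊗ₖ σ) * A) * C)).trace := by
  have hleft : ((ρ ⊗ₖ σ) * ((C ⊗ₖ 1) * A)).trace = (ρ * (C * ptraceR ((1 ⊗ₖ σ) * A))).trace := by
    rw [← Matrix.mul_assoc, ← mul_kronecker_mul, mul_one, trace_kronecker_mul, Matrix.mul_assoc]
  have hright : ((ρ ⊗ₖ σ) * (A * (C ⊗ₖ 1))).trace = (ρ * (ptraceR ((1 ⊗ₖ σ) * A) * C)).trace := by
    rw [← Matrix.mul_assoc, trace_mul_comm, ← Matrix.mul_assoc, ← mul_kronecker_mul, one_mul,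
      trace_kronecker_mul]
    exact (trace_mul_cycle _ _ _).trans (trace_mul_comm _ _)
  rw [Matrix.mul_sub, Matrix.mul_sub, trace_sub, trace_sub, hleft, hright]

lemma conj_mul_conj_of_mul_eq_one {α m n : Type*} [Semiring α] [Fintype m] [Fintype n]
    [DecidableEq m] {W : Matrix n m α} {V : Matrix m n α} (hVW : V * W = 1)
    (X Y : Matrix m m α) : (W * X * V) * (W * Y * V) = W * (X * Y) * V := by
  simp only [Matrix.mul_assoc]
  rw [← Matrix.mul_assoc V, hVW, Matrix.one_mul]

lemma commute_one_kronecker_kronecker_one {α m n : Type*} [CommSemiring α] [Fintype m]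
    [DecidableEq m] [Fintype n] [DecidableEq n] (A : Matrix m m α) (B : Matrix n n α) :
    Commute (1 ⊗ₖ B) (A ⊗ₖ 1) := by
  rw [Commute, SemiconjBy, ← mul_kronecker_mul, ← mul_kronecker_mul]
  simp

theorem commutator_expectation_identity_general
    {k r k' r' : Type*} [Fintype k] [DecidableEq k] [Fintype r] [DecidableEq r]
    [Fintype k'] [DecidableEq k'] [Fintype r'] [DecidableEq r']
    (V : Matrix (k' × r') (k × r) ℂ) (hV2 : V * Vᴴ = 1)
    (Q : Matrix k k ℂ)
    (P : Matrix k' k' ℂ)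
    (ρ : Matrix k k ℂ) (ρR : Matrix r r ℂ) (hρR : IsDensity ρR)
    (XK : Matrix k k ℂ) (XR : Matrix r r ℂ)
    (XK' : Matrix k' k' ℂ)
    (XR' : Matrix r' r' ℂ)
    (Z : Matrix (k × r) (k × r) ℂ)
    (hZ : Z = Vᴴ * (XK' ⊗ₖ (1 : Matrix r' r' ℂ) + (1 : Matrix k' k' ℂ) ⊗ₖ XR') * V -
      (XK ⊗ₖ (1 : Matrix r r ℂ) + (1 : Matrix k k ℂ) ⊗ₖ XR)) :
    Matrix.trace ((ρ ⊗ₖ ρR) *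
        ((Vᴴ * ((1 : Matrix k' k' ℂ) ⊗ₖ XR') * V) *
          (Vᴴ * (P ⊗ₖ (1 : Matrix r' r' ℂ)) * V - Q ⊗ₖ (1 : Matrix r r ℂ)) -
         (Vᴴ * (P ⊗ₖ (1 : Matrix r' r' ℂ)) * V - Q ⊗ₖ (1 : Matrix r r ℂ)) *
          (Vᴴ * ((1 : Matrix k' k' ℂ) ⊗ₖ XR') * V))) =
      Matrix.trace (ρ *
        (Q * ((XK - ptraceR (((1 : Matrix k k ℂ) ⊗ₖ ρR) *
                (Vᴴ * (XK' ⊗ₖ (1 : Matrix r' r' ℂ)) * V))) +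
              ptraceR (((1 : Matrix k k ℂ) ⊗ₖ ρR) * Z)) -
         ((XK - ptraceR (((1 : Matrix k k ℂ) ⊗ₖ ρR) *
                (Vᴴ * (XK' ⊗ₖ (1 : Matrix r' r' ℂ)) * V))) +
              ptraceR (((1 : Matrix k k ℂ) ⊗ₖ ρR) * Z)) * Q)) := by
  set A := Vᴴ * ((1 : Matrix k' k' ℂ) ⊗ₖ XR') * V
  set M := Vᴴ * (P ⊗ₖ (1 : Matrix r' r' ℂ)) * V
  set T := ptraceR ((1 ⊗ₖ ρR) * (Vᴴ * (XK' ⊗ₖ (1 : Matrix r' r' ℂ)) * V))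
  set B := ptraceR ((1 ⊗ₖ ρR) * A)
  have hAM : Commute A M := by
    simp only [A, M, Commute, SemiconjBy, conj_mul_conj_of_mul_eq_one hV2,
      (commute_one_kronecker_kronecker_one P XR').eq]
  have hW : ptraceR ((1 ⊗ₖ ρR) * Z) = T + B - (XK + (ρR * XR).trace • 1) := by
    simp only [hZ, Matrix.mul_add, Matrix.add_mul, Matrix.mul_sub, ptraceR_add, ptraceR_sub,
      ptraceR_one_kronecker_mul_kronecker, Matrix.mul_one, hρR.2, one_smul, T, B, A]
  have hLHS : A * (M - Q ⊗ₖ 1) - (M - Q ⊗ₖ 1) * A = (Q ⊗ₖ 1) * A - A * (Q ⊗ₖ 1) := by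
    rw [Matrix.mul_sub, Matrix.sub_mul, hAM.eq]; abel
  have hRHS : Q * (XK - T + ptraceR ((1 ⊗ₖ ρR) * Z)) - (XK - T + ptraceR ((1 ⊗ₖ ρR) * Z)) * Q =
      Q * B - B * Q := by
    have hscalar : Commute Q ((ρR * XR).trace • 1) := (Commute.one_right Q).smul_right _
    rw [hW, show XK - T + (T + B - (XK + (ρR * XR).trace • 1)) = B - (ρR * XR).trace • 1 by abel,
      Matrix.mul_sub, Matrix.sub_mul, hscalar.eq]
    abel
  rw [hLHS, hRHS, trace_kronecker_mul_commutator_kronecker_one]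

/-- Commutator expectation identity in the proof of the key lemma. -/
theorem commutator_expectation_identity
    {k r k' r' : Type*} [Fintype k] [DecidableEq k] [Fintype r] [DecidableEq r]
    [Fintype k'] [DecidableEq k'] [Fintype r'] [DecidableEq r']
    (V : Matrix (k' × r') (k × r) ℂ) (hV1 : Vᴴ * V = 1) (hV2 : V * Vᴴ = 1)
    (Q : Matrix k k ℂ) (hQh : Q.IsHermitian) (hQp : Q * Q = Q)
    (P : Matrix k' k' ℂ)
    (ρ : Matrix k k ℂ) (hρ : IsDensity ρ) (ρR : Matrix r r ℂ) (hρR : IsDensity ρR)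
    (XK : Matrix k k ℂ) (hXK : XK.IsHermitian) (XR : Matrix r r ℂ) (hXR : XR.IsHermitian)
    (XK' : Matrix k' k' ℂ) (hXK' : XK'.IsHermitian)
    (XR' : Matrix r' r' ℂ) (hXR' : XR'.IsHermitian)
    (Z : Matrix (k × r) (k × r) ℂ)
    (hZ : Z = Vᴴ * (XK' ⊗ₖ (1 : Matrix r' r' ℂ) + (1 : Matrix k' k' ℂ) ⊗ₖ XR') * V -
      (XK ⊗ₖ (1 : Matrix r r ℂ) + (1 : Matrix k k ℂ) ⊗ₖ XR)) :
    Matrix.trace ((ρ ⊗ₖ ρR) *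
        ((Vᴴ * ((1 : Matrix k' k' ℂ) ⊗ₖ XR') * V) *
          (Vᴴ * (P ⊗ₖ (1 : Matrix r' r' ℂ)) * V - Q ⊗ₖ (1 : Matrix r r ℂ)) -
         (Vᴴ * (P ⊗ₖ (1 : Matrix r' r' ℂ)) * V - Q ⊗ₖ (1 : Matrix r r ℂ)) *
          (Vᴴ * ((1 : Matrix k' k' ℂ) ⊗ₖ XR') * V))) =
      Matrix.trace (ρ *
        (Q * ((XK - ptraceR (((1 : Matrix k k ℂ) ⊗ₖ ρR) *
                (Vᴴ * (XK' ⊗ₖ (1 : Matrix r' r' ℂ)) * V))) +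
              ptraceR (((1 : Matrix k k ℂ) ⊗ₖ ρR) * Z)) -
         ((XK - ptraceR (((1 : Matrix k k ℂ) ⊗ₖ ρR) *
                (Vᴴ * (XK' ⊗ₖ (1 : Matrix r' r' ℂ)) * V))) +
              ptraceR (((1 : Matrix k k ℂ) ⊗ₖ ρR) * Z)) * Q)) :=
  commutator_expectation_identity_general V hV2 Q P ρ ρR hρR XK XR XK' XR' Z hZ
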